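/- arXiv:1509.05502 — 6 statements merged into one kernel-verified Lean document; each statement's English description precedes it below -/
import Mathlib

section
/- Let d be the 0–1 distance on 𝒳 (d(x,x̂) = 0 if x = x̂ and d(x,x̂) = 1 otherwise). Define α*(y,z,w) = 1/|𝒴| for all (y,z,w) ∈ 𝒴 × 𝒳 × 𝒲, let x̂* ∈ 𝒳 be a maximizer of the marginal x ↦ ∑_{z,w} p(x,z,w), and define β*(x̂,y) = 1 if x̂ = x̂* and β*(x̂,y) = 0 otherwise. Then α* ∈ A, β* ∈ B, and (α*,β*) is a Nash equilibrium (a babbling equilibrium). -/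
/-!
Against a receiver that ignores the message, the expected distortion does not depend on the
sender's policy, so the sender only minimises the leakage `ζ`, which is a Kullback–Leibler
divergence and hence nonnegative (Gibbs' inequality); the uniform policy makes `Y` independent
of `W`, so `ζ = 0` there. Against a message that is independent of `(X, Z, W)`, the receiver's
cost is an average over `y` of convex combinations of the distortions `∑ₓ d(x, x') pₓ(x)` of
constant guesses `x'`, and for the 0–1 distance these equal `1 - pₓ(x')`, minimised at a mode `x̂*`.
-/

open Finset

noncomputable section

variable {X W Y : Type*} [Fintype X] [Fintype W] [Fintype Y]

/-- The set `A` of sender policies: conditional distributions of `Y` given `(Z, W)`. -/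
def senderSet (X W Y : Type*) [Fintype X] [Fintype W] [Fintype Y] :
    Set (Y × X × W → ℝ) :=
  {α | (∀ t, 0 ≤ α t ∧ α t ≤ 1) ∧ ∀ z w, ∑ y, α (y, z, w) = 1}

/-- The set `B` of receiver policies: conditional distributions of `X̂` given `Y`. -/
def receiverSet (X Y : Type*) [Fintype X] [Fintype Y] : Set (X × Y → ℝ) :=
  {β | (∀ t, 0 ≤ β t ∧ β t ≤ 1) ∧ ∀ y, ∑ x, β (x, y) = 1}

/-- Expected distortion `ξ(α, β) = E{d(X, X̂)}`. -/
def xi (d : X × X → ℝ) (p : X × X × W → ℝ) (α : Y × X × W → ℝ) (β : X × Y → ℝ) : ℝ :=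
  ∑ x, ∑ x', ∑ y, ∑ z, ∑ w, d (x, x') * β (x', y) * α (y, z, w) * p (x, z, w)

/-- Joint distribution `P_α(y, w)` of `(Y, W)` induced by the sender policy `α`. -/
def Pyw (p : X × X × W → ℝ) (α : Y × X × W → ℝ) (y : Y) (w : W) : ℝ :=
  ∑ z, ∑ x, α (y, z, w) * p (x, z, w)

/-- Marginal distribution `P_α(y)` of `Y` induced by the sender policy `α`. -/
def Py (p : X × X × W → ℝ) (α : Y × X × W → ℝ) (y : Y) : ℝ :=
  ∑ w, Pyw p α y w

/-- Marginal distribution `q(w)` of the private information `W`. -/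
def qW (p : X × X × W → ℝ) (w : W) : ℝ := ∑ z, ∑ x, p (x, z, w)

/-- Mutual information `ζ(α) = I(Y; W)`.  Summands with `P_α(y, w) = 0` automatically
vanish since they are multiplied by `P_α(y, w) = 0`. -/
def zeta (p : X × X × W → ℝ) (α : Y × X × W → ℝ) : ℝ :=
  ∑ y, ∑ w, Pyw p α y w * Real.log (Pyw p α y w / (Py p α y * qW p w))

/-- Sender cost `U(α, β) = ξ(α, β) + ρ ζ(α)`. -/
def Ucost (d : X × X → ℝ) (p : X × X × W → ℝ) (ρ : ℝ)
    (α : Y × X × W → ℝ) (β : X × Y → ℝ) : ℝ :=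
  xi d p α β + ρ * zeta p α

/-- Receiver cost `V(α, β) = ξ(α, β)`. -/
def Vcost (d : X × X → ℝ) (p : X × X × W → ℝ)
    (α : Y × X × W → ℝ) (β : X × Y → ℝ) : ℝ :=
  xi d p α β

/-- Potential function `Ψ(α, β) = ξ(α, β) + ρ ζ(α)`. -/
def Psi (d : X × X → ℝ) (p : X × X × W → ℝ) (ρ : ℝ)
    (α : Y × X × W → ℝ) (β : X × Y → ℝ) : ℝ :=
  xi d p α β + ρ * zeta p α

/-- `(α, β)` is a Nash equilibrium of the privacy game. -/
def IsNash (d : X × X → ℝ) (p : X × X × W → ℝ) (ρ : ℝ)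
    (α : Y × X × W → ℝ) (β : X × Y → ℝ) : Prop :=
  α ∈ senderSet X W Y ∧ β ∈ receiverSet X Y ∧
    (∀ α' ∈ senderSet X W Y, Ucost d p ρ α β ≤ Ucost d p ρ α' β) ∧
    (∀ β' ∈ receiverSet X Y, Vcost d p α β ≤ Vcost d p α β')

/-- `(α, β)` is an `ε`-Nash equilibrium of the privacy game. -/
def IsEpsNash (d : X × X → ℝ) (p : X × X × W → ℝ) (ρ ε : ℝ)
    (α : Y × X × W → ℝ) (β : X × Y → ℝ) : Prop :=
  α ∈ senderSet X W Y ∧ β ∈ receiverSet X Y ∧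
    (∀ α' ∈ senderSet X W Y, Ucost d p ρ α β ≤ Ucost d p ρ α' β + ε) ∧
    (∀ β' ∈ receiverSet X Y, Vcost d p α β ≤ Vcost d p α β' + ε)

theorem sub_le_mul_log_div {a b : ℝ} (ha : 0 ≤ a) (hb : 0 ≤ b) (hab : 0 < a → 0 < b) :
    a - b ≤ a * Real.log (a / b) := by
  rcases ha.eq_or_lt with rfl | ha
  · simpa using hb
  have hb := hab ha
  calc a - b = a * (1 - (a / b)⁻¹) := by field_simp
    _ ≤ a * Real.log (a / b) :=
      mul_le_mul_of_nonneg_left (Real.one_sub_inv_le_log_of_pos (by positivity)) ha.le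

theorem sum_mul_log_div_nonneg {ι : Type*} (s : Finset ι) {a b : ι → ℝ}
    (ha : ∀ i ∈ s, 0 ≤ a i) (hb : ∀ i ∈ s, 0 ≤ b i) (hab : ∀ i ∈ s, 0 < a i → 0 < b i)
    (hsum : ∑ i ∈ s, b i ≤ ∑ i ∈ s, a i) :
    0 ≤ ∑ i ∈ s, a i * Real.log (a i / b i) :=
  calc 0 ≤ ∑ i ∈ s, (a i - b i) := by rw [sum_sub_distrib]; linarith
    _ ≤ _ := sum_le_sum fun i hi => sub_le_mul_log_div (ha i hi) (hb i hi) (hab i hi)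

theorem le_sum_mul_of_forall_le {ι : Type*} (s : Finset ι) {w f : ι → ℝ} {m : ℝ}
    (hw0 : ∀ i ∈ s, 0 ≤ w i) (hw1 : ∑ i ∈ s, w i = 1) (hf : ∀ i ∈ s, m ≤ f i) :
    m ≤ ∑ i ∈ s, w i * f i :=
  calc m = ∑ i ∈ s, w i * m := by rw [← sum_mul, hw1, one_mul]
    _ ≤ _ := sum_le_sum fun i hi => mul_le_mul_of_nonneg_left (hf i hi) (hw0 i hi)

def pX (p : X × X × W → ℝ) (x : X) : ℝ := ∑ z, ∑ w, p (x, z, w)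

def constDistortion (d : X × X → ℝ) (p : X × X × W → ℝ) (x' : X) : ℝ :=
  ∑ x, d (x, x') * pX p x

section

variable {d : X × X → ℝ} {p : X × X × W → ℝ} {α α' : Y × X × W → ℝ} {β β' : X × Y → ℝ}

theorem sum_qW : ∑ w, qW p w = ∑ x, ∑ z, ∑ w, p (x, z, w) := by
  simp only [qW]
  rw [sum_comm_cycle]
  exact sum_congr rfl fun x _ => sum_comm

theorem Pyw_nonneg (hp0 : ∀ t, 0 ≤ p t) (hα : α ∈ senderSet X W Y) (y : Y) (w : W) :
    0 ≤ Pyw p α y w :=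
  sum_nonneg fun _ _ => sum_nonneg fun _ _ => mul_nonneg (hα.1 _).1 (hp0 _)

theorem Pyw_le_qW (hp0 : ∀ t, 0 ≤ p t) (hα : α ∈ senderSet X W Y) (y : Y) (w : W) :
    Pyw p α y w ≤ qW p w :=
  sum_le_sum fun _ _ => sum_le_sum fun _ _ => mul_le_of_le_one_left (hp0 _) (hα.1 _).2

theorem zeta_nonneg (hp0 : ∀ t, 0 ≤ p t) (hq : ∑ w, qW p w = 1) (hα : α ∈ senderSet X W Y) :
    0 ≤ zeta p α := by
  have hq0 : ∀ w, 0 ≤ qW p w := fun w => sum_nonneg fun _ _ => sum_nonneg fun _ _ => hp0 _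
  have hpos : ∀ y w, 0 < Pyw p α y w → 0 < Py p α y * qW p w := fun y w h =>
    mul_pos (h.trans_le (single_le_sum (fun w _ => Pyw_nonneg hp0 hα y w) (mem_univ w)))
      (h.trans_le (Pyw_le_qW hp0 hα y w))
  have hsum : ∑ i : Y × W, Py p α i.1 * qW p i.2 = ∑ i : Y × W, Pyw p α i.1 i.2 := by
    simp only [Fintype.sum_prod_type, ← mul_sum, hq, mul_one]
    rfl
  have := sum_mul_log_div_nonneg univ (a := fun i : Y × W => Pyw p α i.1 i.2)
    (b := fun i => Py p α i.1 * qW p i.2) (fun i _ => Pyw_nonneg hp0 hα i.1 i.2)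
    (fun i _ => mul_nonneg (sum_nonneg fun w _ => Pyw_nonneg hp0 hα i.1 w) (hq0 i.2))
    (fun i _ => hpos i.1 i.2) hsum.le
  simpa only [zeta, Fintype.sum_prod_type] using this

theorem zeta_eq_zero_of_indep (h : ∀ y w, Pyw p α y w = Py p α y * qW p w) : zeta p α = 0 :=
  sum_eq_zero fun y _ => sum_eq_zero fun w _ => by
    rw [← h]
    rcases eq_or_ne (Pyw p α y w) 0 with h0 | h0
    · rw [h0, zero_mul]
    · rw [div_self h0, Real.log_one, mul_zero]

theorem zeta_eq_zero_of_const {a : Y → ℝ} (hα : ∀ t, α t = a t.1) (hq : ∑ w, qW p w = 1) :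
    zeta p α = 0 := by
  have hPyw : ∀ y w, Pyw p α y w = a y * qW p w := by
    simp only [Pyw, qW, hα, mul_sum, implies_true]
  refine zeta_eq_zero_of_indep fun y w => ?_
  have hPy : Py p α y = a y := by simp only [Py, hPyw, ← mul_sum, hq, mul_one]
  rw [hPyw, hPy]

theorem xi_of_receiver_const {b : X → ℝ} (hα : ∀ z w, ∑ y, α (y, z, w) = 1)
    (hβ : ∀ t, β t = b t.1) : xi d p α β = ∑ x', b x' * constDistortion d p x' := by
  have inner : ∀ x x', ∑ y, ∑ z, ∑ w, d (x, x') * β (x', y) * α (y, z, w) * p (x, z, w)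
      = b x' * (d (x, x') * pX p x) := by
    intro x x'
    simp only [hβ, pX, mul_sum]
    rw [sum_comm]
    refine sum_congr rfl fun z _ => ?_
    rw [sum_comm]
    refine sum_congr rfl fun w _ => ?_
    rw [← sum_mul, ← mul_sum, hα]
    ring
  simp only [xi, inner]
  rw [sum_comm]
  simp only [constDistortion, mul_sum]

theorem xi_of_sender_const {a : Y → ℝ} (hα : ∀ t, α t = a t.1) :
    xi d p α β = ∑ y, a y * ∑ x', β (x', y) * constDistortion d p x' := by
  have inner : ∀ x x' y, ∑ z, ∑ w, d (x, x') * β (x', y) * α (y, z, w) * p (x, z, w)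
      = a y * (β (x', y) * (d (x, x') * pX p x)) := by
    intro x x' y
    simp only [hα, pX, mul_sum]
    exact sum_congr rfl fun z _ => sum_congr rfl fun w _ => by ring
  simp only [xi, inner, constDistortion, mul_sum]
  rw [sum_comm_cycle]
  exact sum_congr rfl fun y _ => sum_comm

theorem constDistortion_of_zeroOne [DecidableEq X]
    (hd : ∀ x x', d (x, x') = if x = x' then 0 else 1) (hp1 : ∑ x, pX p x = 1) (x' : X) :
    constDistortion d p x' = 1 - pX p x' := by
  have h : ∀ x, d (x, x') * pX p x = pX p x - if x = x' then pX p x else 0 := fun x => by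
    rw [hd]; split_ifs <;> ring
  simp only [constDistortion, h, sum_sub_distrib, hp1, sum_ite_eq', mem_univ, if_true]

theorem mem_senderSet_of_const {a : Y → ℝ} (hα : ∀ t, α t = a t.1) (ha0 : ∀ y, 0 ≤ a y)
    (ha1 : ∑ y, a y = 1) : α ∈ senderSet X W Y :=
  ⟨fun t => by
    rw [hα]
    exact ⟨ha0 _, ha1 ▸ single_le_sum (fun y _ => ha0 y) (mem_univ _)⟩,
   fun z w => by simp only [hα, ha1]⟩

theorem mem_receiverSet_of_pointMass [DecidableEq X] {x₀ : X}
    (hβ : ∀ t, β t = if t.1 = x₀ then 1 else 0) : β ∈ receiverSet X Y :=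
  ⟨fun t => by rw [hβ]; split_ifs <;> norm_num, fun y => by simp [hβ]⟩

theorem Ucost_le_of_zeta_eq_zero {ρ : ℝ} {b : X → ℝ} (hρ : 0 ≤ ρ) (hp0 : ∀ t, 0 ≤ p t)
    (hq : ∑ w, qW p w = 1) (hβ : ∀ t, β t = b t.1) (hα : α ∈ senderSet X W Y)
    (hζ : zeta p α = 0) (hα' : α' ∈ senderSet X W Y) : Ucost d p ρ α β ≤ Ucost d p ρ α' β := by
  rw [Ucost, Ucost, xi_of_receiver_const hα.2 hβ, xi_of_receiver_const hα'.2 hβ, hζ, mul_zero,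
    add_zero]
  exact le_add_of_nonneg_right (mul_nonneg hρ (zeta_nonneg hp0 hq hα'))

theorem Vcost_le_of_sender_const [DecidableEq X] {a : Y → ℝ} {x₀ : X} (hα : ∀ t, α t = a t.1)
    (ha0 : ∀ y, 0 ≤ a y) (hβ : ∀ t, β t = if t.1 = x₀ then 1 else 0)
    (hx₀ : ∀ x', constDistortion d p x₀ ≤ constDistortion d p x') (hβ' : β' ∈ receiverSet X Y) :
    Vcost d p α β ≤ Vcost d p α β' := by
  have hβD : ∀ y, ∑ x', β (x', y) * constDistortion d p x' = constDistortion d p x₀ := by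
    simp [hβ]
  rw [Vcost, Vcost, xi_of_sender_const hα, xi_of_sender_const hα]
  simp only [hβD]
  exact sum_le_sum fun y _ => mul_le_mul_of_nonneg_left
    (le_sum_mul_of_forall_le univ (fun x' _ => (hβ'.1 _).1) (hβ'.2 y) fun x' _ => hx₀ x') (ha0 y)

end

theorem babbling_equilibrium_general [Nonempty Y] [DecidableEq X]
    (p : X × X × W → ℝ) (hp0 : ∀ t, 0 ≤ p t)
    (hp1 : ∑ x, ∑ z, ∑ w, p (x, z, w) = 1)
    (ρ : ℝ) (hρ : 0 ≤ ρ)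
    (d : X × X → ℝ) (hd : ∀ x x', d (x, x') = if x = x' then 0 else 1)
    (αstar : Y × X × W → ℝ) (hα : ∀ t, αstar t = 1 / (Fintype.card Y : ℝ))
    (xstar : X) (hxstar : ∀ x, ∑ z, ∑ w, p (x, z, w) ≤ ∑ z, ∑ w, p (xstar, z, w))
    (βstar : X × Y → ℝ) (hβ : ∀ t, βstar t = if t.1 = xstar then 1 else 0) :
    αstar ∈ senderSet X W Y ∧ βstar ∈ receiverSet X Y ∧ IsNash d p ρ αstar βstar := by
  set a : Y → ℝ := fun _ => 1 / (Fintype.card Y : ℝ)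
  have ha0 : ∀ y, 0 ≤ a y := fun _ => by positivity
  have hαA := mem_senderSet_of_const (a := a) hα ha0 (by simp [a])
  have hβB := mem_receiverSet_of_pointMass hβ
  have hq : ∑ w, qW p w = 1 := sum_qW.trans hp1
  have hxstar_min : ∀ x', constDistortion d p xstar ≤ constDistortion d p x' := fun x' => by
    rw [constDistortion_of_zeroOne hd hp1, constDistortion_of_zeroOne hd hp1]
    exact sub_le_sub_left (hxstar x') 1
  refine ⟨hαA, hβB, hαA, hβB, fun α' hα'A => ?_, fun β' hβ'B => ?_⟩
  · exact Ucost_le_of_zeta_eq_zero (b := fun x => if x = xstar then 1 else 0) hρ hp0 hq hβ hαA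
      (zeta_eq_zero_of_const (a := a) hα hq) hα'A
  · exact Vcost_le_of_sender_const (a := a) hα ha0 hβ hxstar_min hβ'B

/-- the babbling equilibrium.  With the 0–1 distance, the uniform sender
policy `α*` together with the receiver policy `β*` that deterministically outputs an
ex-ante most likely value `x̂*` is a Nash equilibrium. -/
theorem babbling_equilibrium [Nonempty X] [Nonempty W] [Nonempty Y] [DecidableEq X]
    (p : X × X × W → ℝ) (hp0 : ∀ t, 0 ≤ p t)
    (hp1 : ∑ x, ∑ z, ∑ w, p (x, z, w) = 1)
    (ρ : ℝ) (hρ : 0 ≤ ρ)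
    (d : X × X → ℝ) (hd : ∀ x x', d (x, x') = if x = x' then 0 else 1)
    (αstar : Y × X × W → ℝ) (hα : ∀ t, αstar t = 1 / (Fintype.card Y : ℝ))
    (xstar : X) (hxstar : ∀ x, ∑ z, ∑ w, p (x, z, w) ≤ ∑ z, ∑ w, p (xstar, z, w))
    (βstar : X × Y → ℝ) (hβ : ∀ t, βstar t = if t.1 = xstar then 1 else 0) :
    αstar ∈ senderSet X W Y ∧ βstar ∈ receiverSet X Y ∧ IsNash d p ρ αstar βstar :=
  babbling_equilibrium_general p hp0 hp1 ρ hρ d hd αstar hα xstar hxstar βstar hβ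
end
end

section
/- Along any best-response trajectory (α^k,β^k)_{k≥0}, the potential is nonincreasing: Ψ(α^k,β^k) ≤ Ψ(α^{k-1},β^{k-1}) for every k ≥ 1. -/
open Finset

noncomputable section

variable {X W Y : Type*} [Fintype X] [Fintype W] [Fintype Y]

/-- A best-response trajectory (Algorithm 1): at odd steps the receiver best-responds
(and the sender keeps her policy), at even steps `k ≥ 2` the sender best-responds
(and the receiver keeps her policy). -/
def IsBRTraj (d : X × X → ℝ) (p : X × X × W → ℝ) (ρ : ℝ)
    (αs : ℕ → Y × X × W → ℝ) (βs : ℕ → X × Y → ℝ) : Prop :=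
  αs 0 ∈ senderSet X W Y ∧ βs 0 ∈ receiverSet X Y ∧
    (∀ k, 1 ≤ k → Odd k →
      βs k ∈ receiverSet X Y ∧
      (∀ β ∈ receiverSet X Y, Vcost d p (αs (k - 1)) (βs k) ≤ Vcost d p (αs (k - 1)) β) ∧
      αs k = αs (k - 1)) ∧
    (∀ k, 2 ≤ k → Even k →
      αs k ∈ senderSet X W Y ∧
      (∀ α ∈ senderSet X W Y,
        Ucost d p ρ (αs k) (βs (k - 1)) ≤ Ucost d p ρ α (βs (k - 1))) ∧
      βs k = βs (k - 1))

/-! Ψ is an exact potential of the game: it equals the sender's cost U, and it differs from the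
receiver's cost V = ξ by ρ ζ(α), which does not depend on the receiver's policy. Hence no
best-response step can increase Ψ. -/

theorem psi_le_psi_of_vcost_le {d : X × X → ℝ} {p : X × X × W → ℝ} {ρ : ℝ}
    {α : Y × X × W → ℝ} {β β' : X × Y → ℝ} (h : Vcost d p α β ≤ Vcost d p α β') :
    Psi d p ρ α β ≤ Psi d p ρ α β' :=
  add_le_add_left h _

namespace IsBRTraj

variable {d : X × X → ℝ} {p : X × X × W → ℝ} {ρ : ℝ}
  {αs : ℕ → Y × X × W → ℝ} {βs : ℕ → X × Y → ℝ}

theorem mem_senderSet_and_mem_receiverSet (h : IsBRTraj d p ρ αs βs) :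
    ∀ k, αs k ∈ senderSet X W Y ∧ βs k ∈ receiverSet X Y
  | 0 => ⟨h.1, h.2.1⟩
  | k + 1 => by
    obtain ⟨hα, hβ⟩ := h.mem_senderSet_and_mem_receiverSet k
    rcases Nat.even_or_odd (k + 1) with heven | hodd
    · have hk : 2 ≤ k + 1 := by rcases heven with ⟨m, hm⟩; omega
      obtain ⟨hα', -, hβ'⟩ := h.2.2.2 (k + 1) hk heven
      rw [Nat.add_sub_cancel] at hβ'
      exact ⟨hα', hβ' ▸ hβ⟩
    · obtain ⟨hβ', -, hα'⟩ := h.2.2.1 (k + 1) (Nat.le_add_left 1 k) hodd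
      rw [Nat.add_sub_cancel] at hα'
      exact ⟨hα' ▸ hα, hβ'⟩

theorem psi_le_of_odd (h : IsBRTraj d p ρ αs βs) {k : ℕ} (hk : 1 ≤ k) (hodd : Odd k) :
    Psi d p ρ (αs k) (βs k) ≤ Psi d p ρ (αs (k - 1)) (βs (k - 1)) := by
  obtain ⟨-, hbest, hα⟩ := h.2.2.1 k hk hodd
  rw [hα]
  exact psi_le_psi_of_vcost_le (hbest _ (h.mem_senderSet_and_mem_receiverSet (k - 1)).2)

theorem psi_le_of_even (h : IsBRTraj d p ρ αs βs) {k : ℕ} (hk : 2 ≤ k) (heven : Even k) :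
    Psi d p ρ (αs k) (βs k) ≤ Psi d p ρ (αs (k - 1)) (βs (k - 1)) := by
  obtain ⟨-, hbest, hβ⟩ := h.2.2.2 k hk heven
  rw [hβ]
  exact hbest _ (h.mem_senderSet_and_mem_receiverSet (k - 1)).1

end IsBRTraj

theorem potential_nonincreasing_along_best_response_general
    (p : X × X × W → ℝ)
    (d : X × X → ℝ)
    (ρ : ℝ)
    (αs : ℕ → Y × X × W → ℝ) (βs : ℕ → X × Y → ℝ)
    (htraj : IsBRTraj d p ρ αs βs) :
    ∀ k, 1 ≤ k → Psi d p ρ (αs k) (βs k) ≤ Psi d p ρ (αs (k - 1)) (βs (k - 1)) := by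
  intro k hk
  rcases Nat.even_or_odd k with heven | hodd
  · have hk2 : 2 ≤ k := by rcases heven with ⟨m, hm⟩; omega
    exact htraj.psi_le_of_even hk2 heven
  · exact htraj.psi_le_of_odd hk hodd

/-- the potential `Ψ` is nonincreasing along any best-response trajectory. -/
theorem potential_nonincreasing_along_best_response [Nonempty X] [Nonempty W] [Nonempty Y]
    (p : X × X × W → ℝ) (hp0 : ∀ t, 0 ≤ p t)
    (hp1 : ∑ x, ∑ z, ∑ w, p (x, z, w) = 1)
    (d : X × X → ℝ) (hd : ∀ t, 0 ≤ d t)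
    (ρ : ℝ) (hρ : 0 ≤ ρ)
    (αs : ℕ → Y × X × W → ℝ) (βs : ℕ → X × Y → ℝ)
    (htraj : IsBRTraj d p ρ αs βs) :
    ∀ k, 1 ≤ k → Psi d p ρ (αs k) (βs k) ≤ Psi d p ρ (αs (k - 1)) (βs (k - 1)) :=
  potential_nonincreasing_along_best_response_general p d ρ αs βs htraj
end
end

section
/- Let ε > 0 and let (α^k,β^k)_{k≥0} be a best-response trajectory. For every k ≥ 3, if (α^k,β^k) ∉ 𝒩_ε then Ψ(α^{k+1},β^{k+1}) < Ψ(α^k,β^k) − ε. -/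
open Finset

noncomputable section

variable {X W Y : Type*} [Fintype X] [Fintype W] [Fintype Y]

/-!
`Ψ` is an exact potential of the game: it equals the sender's cost `U`, and it differs from the
receiver's cost `V` by `ρ ζ(α)`, which does not depend on `β`. Right after a best response of one
player the state is exactly optimal for that player, so if it is not an `ε`-Nash equilibrium the
other player has a deviation gaining more than `ε`; that player's best response at the next step
gains at least as much, and `Ψ` records the whole gain.
-/

section PotentialGame

variable {d : X × X → ℝ} {p : X × X × W → ℝ} {ρ ε : ℝ}
  {α : Y × X × W → ℝ} {β : X × Y → ℝ}

theorem Psi_eq_Ucost :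
    Psi d p ρ α β = Ucost d p ρ α β :=
  rfl

theorem Psi_sub_Psi_eq_Vcost_sub_Vcost (β' : X × Y → ℝ) :
    Psi d p ρ α β - Psi d p ρ α β' = Vcost d p α β - Vcost d p α β' := by
  simp only [Psi, Vcost]
  ring

theorem exists_sender_deviation_of_not_isEpsNash (hε : 0 ≤ ε)
    (hα : α ∈ senderSet X W Y) (hβ : β ∈ receiverSet X Y)
    (hβ_best : ∀ β' ∈ receiverSet X Y, Vcost d p α β ≤ Vcost d p α β')
    (hnot : ¬ IsEpsNash d p ρ ε α β) :
    ∃ α' ∈ senderSet X W Y, Ucost d p ρ α' β + ε < Ucost d p ρ α β := by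
  by_contra! hsender
  exact hnot ⟨hα, hβ, hsender, fun β' hβ' => by linarith [hβ_best β' hβ']⟩

theorem exists_receiver_deviation_of_not_isEpsNash (hε : 0 ≤ ε)
    (hα : α ∈ senderSet X W Y) (hβ : β ∈ receiverSet X Y)
    (hα_best : ∀ α' ∈ senderSet X W Y, Ucost d p ρ α β ≤ Ucost d p ρ α' β)
    (hnot : ¬ IsEpsNash d p ρ ε α β) :
    ∃ β' ∈ receiverSet X Y, Vcost d p α β' + ε < Vcost d p α β := by
  by_contra! hreceiver
  exact hnot ⟨hα, hβ, fun α' hα' => by linarith [hα_best α' hα'], hreceiver⟩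

end PotentialGame

namespace IsBRTraj

variable {d : X × X → ℝ} {p : X × X × W → ℝ} {ρ ε : ℝ}
  {αs : ℕ → Y × X × W → ℝ} {βs : ℕ → X × Y → ℝ} {k : ℕ}

theorem alpha_succ_of_even (h : IsBRTraj d p ρ αs βs) (hk : Even k) : αs (k + 1) = αs k :=
  (h.2.2.1 (k + 1) (by omega) hk.add_one).2.2

theorem receiver_best_of_even (h : IsBRTraj d p ρ αs βs) (hk : Even k) :
    ∀ β ∈ receiverSet X Y, Vcost d p (αs k) (βs (k + 1)) ≤ Vcost d p (αs k) β :=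
  (h.2.2.1 (k + 1) (by omega) hk.add_one).2.1

theorem beta_succ_of_odd (h : IsBRTraj d p ρ αs βs) (hk : Odd k) : βs (k + 1) = βs k :=
  (h.2.2.2 (k + 1) (by obtain ⟨j, rfl⟩ := hk; omega) hk.add_one).2.2

theorem sender_best_of_odd (h : IsBRTraj d p ρ αs βs) (hk : Odd k) :
    ∀ α ∈ senderSet X W Y, Ucost d p ρ (αs (k + 1)) (βs k) ≤ Ucost d p ρ α (βs k) :=
  (h.2.2.2 (k + 1) (by obtain ⟨j, rfl⟩ := hk; omega) hk.add_one).2.1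

theorem mem_senderSet (h : IsBRTraj d p ρ αs βs) : ∀ k, αs k ∈ senderSet X W Y
  | 0 => h.1
  | k + 1 => by
    rcases Nat.even_or_odd k with hk | hk
    · rw [h.alpha_succ_of_even hk]
      exact h.mem_senderSet k
    · exact (h.2.2.2 (k + 1) (by obtain ⟨j, rfl⟩ := hk; omega) hk.add_one).1

theorem mem_receiverSet (h : IsBRTraj d p ρ αs βs) : ∀ k, βs k ∈ receiverSet X Y
  | 0 => h.2.1
  | k + 1 => by
    rcases Nat.even_or_odd k with hk | hk
    · exact (h.2.2.1 (k + 1) (by omega) hk.add_one).1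
    · rw [h.beta_succ_of_odd hk]
      exact h.mem_receiverSet k

theorem receiver_best_of_odd (h : IsBRTraj d p ρ αs βs) (hk : Odd k) :
    ∀ β ∈ receiverSet X Y, Vcost d p (αs k) (βs k) ≤ Vcost d p (αs k) β := by
  obtain ⟨j, hj, rfl⟩ : ∃ j, Even j ∧ k = j + 1 := ⟨k - 1, by grind⟩
  rw [h.alpha_succ_of_even hj]
  exact h.receiver_best_of_even hj

theorem sender_best_of_even (h : IsBRTraj d p ρ αs βs) (hk : Even k) (hk0 : k ≠ 0) :
    ∀ α ∈ senderSet X W Y, Ucost d p ρ (αs k) (βs k) ≤ Ucost d p ρ α (βs k) := by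
  obtain ⟨j, hj, rfl⟩ : ∃ j, Odd j ∧ k = j + 1 := ⟨k - 1, by grind⟩
  rw [h.beta_succ_of_odd hj]
  exact h.sender_best_of_odd hj

theorem Psi_succ_lt_of_odd (h : IsBRTraj d p ρ αs βs) (hε : 0 ≤ ε) (hk : Odd k)
    (hnot : ¬ IsEpsNash d p ρ ε (αs k) (βs k)) :
    Psi d p ρ (αs (k + 1)) (βs (k + 1)) < Psi d p ρ (αs k) (βs k) - ε := by
  obtain ⟨α', hα', hgain⟩ := exists_sender_deviation_of_not_isEpsNash hε (h.mem_senderSet k)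
    (h.mem_receiverSet k) (h.receiver_best_of_odd hk) hnot
  calc Psi d p ρ (αs (k + 1)) (βs (k + 1))
      = Ucost d p ρ (αs (k + 1)) (βs k) := by rw [h.beta_succ_of_odd hk, Psi_eq_Ucost]
    _ ≤ Ucost d p ρ α' (βs k) := h.sender_best_of_odd hk α' hα'
    _ < Psi d p ρ (αs k) (βs k) - ε := by rw [Psi_eq_Ucost]; linarith

theorem Psi_succ_lt_of_even (h : IsBRTraj d p ρ αs βs) (hε : 0 ≤ ε) (hk : Even k)
    (hk0 : k ≠ 0) (hnot : ¬ IsEpsNash d p ρ ε (αs k) (βs k)) :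
    Psi d p ρ (αs (k + 1)) (βs (k + 1)) < Psi d p ρ (αs k) (βs k) - ε := by
  obtain ⟨β', hβ', hgain⟩ := exists_receiver_deviation_of_not_isEpsNash hε (h.mem_senderSet k)
    (h.mem_receiverSet k) (h.sender_best_of_even hk hk0) hnot
  calc Psi d p ρ (αs (k + 1)) (βs (k + 1))
      = Psi d p ρ (αs k) (βs k) + (Vcost d p (αs k) (βs (k + 1)) - Vcost d p (αs k) (βs k)) := by
        rw [h.alpha_succ_of_even hk, ← Psi_sub_Psi_eq_Vcost_sub_Vcost]
        ring
    _ ≤ Psi d p ρ (αs k) (βs k) + (Vcost d p (αs k) β' - Vcost d p (αs k) (βs k)) := by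
        gcongr
        exact h.receiver_best_of_even hk β' hβ'
    _ < Psi d p ρ (αs k) (βs k) - ε := by linarith

end IsBRTraj

theorem potential_drop_outside_eps_nash_general
    (p : X × X × W → ℝ)
    (d : X × X → ℝ)
    (ρ : ℝ) (ε : ℝ) (hε : 0 < ε)
    (αs : ℕ → Y × X × W → ℝ) (βs : ℕ → X × Y → ℝ)
    (htraj : IsBRTraj d p ρ αs βs) :
    ∀ k, 3 ≤ k → ¬ IsEpsNash d p ρ ε (αs k) (βs k) →
      Psi d p ρ (αs (k + 1)) (βs (k + 1)) < Psi d p ρ (αs k) (βs k) - ε := by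
  intro k hk hnot
  rcases Nat.even_or_odd k with heven | hodd
  · exact htraj.Psi_succ_lt_of_even hε.le heven (by omega) hnot
  · exact htraj.Psi_succ_lt_of_odd hε.le hodd hnot

/-- along a best-response trajectory, if the state at time `k ≥ 3` is not
an `ε`-Nash equilibrium, then the potential drops by more than `ε` at the next step. -/
theorem potential_drop_outside_eps_nash [Nonempty X] [Nonempty W] [Nonempty Y]
    (p : X × X × W → ℝ) (hp0 : ∀ t, 0 ≤ p t)
    (hp1 : ∑ x, ∑ z, ∑ w, p (x, z, w) = 1)
    (d : X × X → ℝ) (hd : ∀ t, 0 ≤ d t)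
    (ρ : ℝ) (hρ : 0 ≤ ρ) (ε : ℝ) (hε : 0 < ε)
    (αs : ℕ → Y × X × W → ℝ) (βs : ℕ → X × Y → ℝ)
    (htraj : IsBRTraj d p ρ αs βs) :
    ∀ k, 3 ≤ k → ¬ IsEpsNash d p ρ ε (αs k) (βs k) →
      Psi d p ρ (αs (k + 1)) (βs (k + 1)) < Psi d p ρ (αs k) (βs k) - ε :=
  potential_drop_outside_eps_nash_general p d ρ ε hε αs βs htraj
end
end

section
/- The multi-sender privacy game admits Ψ'((α^(i))_i,β) = ξ'(β,(α^(i))_i) + ρ·∑_{i=1}^{n} ζ'_i(α^(i)) as an exact potential function: for all policy profiles, all β̄ ∈ B', every j ∈ {1,…,n} and all ᾱ^(j) ∈ A'_j, V((α^(i))_i,β) − V((α^(i))_i,β̄) = Ψ'((α^(i))_i,β) − Ψ'((α^(i))_i,β̄), and U_j((α^(i))_i,β) − U_j(ᾱ^(j),(α^(i))_{i≠j},β) = Ψ'((α^(i))_i,β) − Ψ'(ᾱ^(j),(α^(i))_{i≠j},β). -/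
open Finset

noncomputable section

variable {n : ℕ} {X : Type*} {Y W : Fin n → Type*}
  [Fintype X] [∀ i, Fintype (Y i)] [∀ i, Fintype (W i)]

/-- The set `A'_i` of policies for sender `i`: conditional distributions of
`Y_i` given `(Z_i, W_i)`. -/
def senderSet' (X : Type*) [Fintype X] {Y W : Fin n → Type*}
    [∀ i, Fintype (Y i)] [∀ i, Fintype (W i)] (i : Fin n) :
    Set (Y i × X × W i → ℝ) :=
  {α | (∀ t, 0 ≤ α t ∧ α t ≤ 1) ∧ ∀ z w, ∑ y, α (y, z, w) = 1}

/-- The set `B'` of receiver policies: conditional distributions of `X̂` given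
`(Y_1, …, Y_n)`. -/
def receiverSet' (X : Type*) [Fintype X] (Y : Fin n → Type*) [∀ i, Fintype (Y i)] :
    Set (X × (∀ i, Y i) → ℝ) :=
  {β | (∀ t, 0 ≤ β t ∧ β t ≤ 1) ∧ ∀ ys, ∑ x, β (x, ys) = 1}

/-- Expected distortion `ξ'(β, (α⁽ⁱ⁾)ᵢ) = E{d(X, X̂)}` in the multi-sender game. -/
def xi' (d : X × X → ℝ) (p : X × (Fin n → X) × (∀ i, W i) → ℝ)
    (a : ∀ i, Y i × X × W i → ℝ) (β : X × (∀ i, Y i) → ℝ) : ℝ :=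
  ∑ x, ∑ x', ∑ ys : ∀ i, Y i, ∑ zs : Fin n → X, ∑ ws : ∀ i, W i,
    d (x, x') * β (x', ys) * (∏ i, a i (ys i, zs i, ws i)) * p (x, zs, ws)

open Classical in
/-- The `(Z_i, W_i)`-marginal `m_i(z_i, w_i)` of `p`. -/
def margZW (p : X × (Fin n → X) × (∀ i, W i) → ℝ) (i : Fin n) (zi : X) (wi : W i) : ℝ :=
  ∑ x, ∑ zs : Fin n → X, ∑ ws : ∀ j, W j,
    if zs i = zi ∧ ws i = wi then p (x, zs, ws) else 0

open Classical in
/-- The `W_i`-marginal `q_i(w_i)` of `p`. -/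
def margW (p : X × (Fin n → X) × (∀ i, W i) → ℝ) (i : Fin n) (wi : W i) : ℝ :=
  ∑ x, ∑ zs : Fin n → X, ∑ ws : ∀ j, W j,
    if ws i = wi then p (x, zs, ws) else 0

/-- Joint distribution `P_i(y_i, w_i)` of `(Y_i, W_i)` induced by sender `i`'s policy. -/
def Pyw' (p : X × (Fin n → X) × (∀ i, W i) → ℝ) (i : Fin n)
    (α : Y i × X × W i → ℝ) (yi : Y i) (wi : W i) : ℝ :=
  ∑ zi, α (yi, zi, wi) * margZW p i zi wi

/-- Marginal distribution `P_i(y_i)` of `Y_i` induced by sender `i`'s policy. -/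
def Py' (p : X × (Fin n → X) × (∀ i, W i) → ℝ) (i : Fin n)
    (α : Y i × X × W i → ℝ) (yi : Y i) : ℝ :=
  ∑ wi, Pyw' p i α yi wi

/-- Mutual information `ζ'_i(α⁽ⁱ⁾) = I(Y_i; W_i)`.  Summands with `P_i(y_i, w_i) = 0`
automatically vanish since they are multiplied by `P_i(y_i, w_i) = 0`. -/
def zeta' (p : X × (Fin n → X) × (∀ i, W i) → ℝ) (i : Fin n)
    (α : Y i × X × W i → ℝ) : ℝ :=
  ∑ yi, ∑ wi, Pyw' p i α yi wi *
    Real.log (Pyw' p i α yi wi / (Py' p i α yi * margW p i wi))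

/-- Cost `U_j((α⁽ⁱ⁾)ᵢ, β) = ξ'(β, (α⁽ⁱ⁾)ᵢ) + ρ ζ'_j(α⁽ʲ⁾)` of sender `j`. -/
def Ucost' (d : X × X → ℝ) (p : X × (Fin n → X) × (∀ i, W i) → ℝ) (ρ : ℝ) (j : Fin n)
    (a : ∀ i, Y i × X × W i → ℝ) (β : X × (∀ i, Y i) → ℝ) : ℝ :=
  xi' d p a β + ρ * zeta' p j (a j)

/-- Receiver cost `V((α⁽ⁱ⁾)ᵢ, β) = ξ'(β, (α⁽ⁱ⁾)ᵢ)`. -/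
def Vcost' (d : X × X → ℝ) (p : X × (Fin n → X) × (∀ i, W i) → ℝ)
    (a : ∀ i, Y i × X × W i → ℝ) (β : X × (∀ i, Y i) → ℝ) : ℝ :=
  xi' d p a β

/-- Potential function `Ψ'((α⁽ⁱ⁾)ᵢ, β) = ξ'(β, (α⁽ⁱ⁾)ᵢ) + ρ ∑ᵢ ζ'_i(α⁽ⁱ⁾)`. -/
def Psi' (d : X × X → ℝ) (p : X × (Fin n → X) × (∀ i, W i) → ℝ) (ρ : ℝ)
    (a : ∀ i, Y i × X × W i → ℝ) (β : X × (∀ i, Y i) → ℝ) : ℝ :=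
  xi' d p a β + ρ * ∑ i, zeta' p i (a i)

/-- `((α⁽ⁱ⁾)ᵢ, β)` is a Nash equilibrium of the multi-sender privacy game. -/
def IsNash' (d : X × X → ℝ) (p : X × (Fin n → X) × (∀ i, W i) → ℝ) (ρ : ℝ)
    (a : ∀ i, Y i × X × W i → ℝ) (β : X × (∀ i, Y i) → ℝ) : Prop :=
  (∀ i, a i ∈ senderSet' X i) ∧ β ∈ receiverSet' X Y ∧
    (∀ j, ∀ ᾱ ∈ senderSet' X j,
      Ucost' d p ρ j a β ≤ Ucost' d p ρ j (Function.update a j ᾱ) β) ∧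
    (∀ β' ∈ receiverSet' X Y, Vcost' d p a β ≤ Vcost' d p a β')

/-- `((α⁽ⁱ⁾)ᵢ, β)` is an `ε`-Nash equilibrium of the multi-sender privacy game. -/
def IsEpsNash' (d : X × X → ℝ) (p : X × (Fin n → X) × (∀ i, W i) → ℝ) (ρ ε : ℝ)
    (a : ∀ i, Y i × X × W i → ℝ) (β : X × (∀ i, Y i) → ℝ) : Prop :=
  (∀ i, a i ∈ senderSet' X i) ∧ β ∈ receiverSet' X Y ∧
    (∀ j, ∀ ᾱ ∈ senderSet' X j,
      Ucost' d p ρ j a β ≤ Ucost' d p ρ j (Function.update a j ᾱ) β + ε) ∧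
    (∀ β' ∈ receiverSet' X Y, Vcost' d p a β ≤ Vcost' d p a β' + ε)

/-! The receiver's cost differs from `Ψ'` by `ρ ∑ᵢ ζ'_i(α⁽ⁱ⁾)`, which does not depend on `β`;
sender `j`'s cost differs from `Ψ'` by `ρ ∑_{i ≠ j} ζ'_i(α⁽ⁱ⁾)`, which does not depend on `α⁽ʲ⁾`. -/

theorem Fintype.sum_apply_sub_sum_apply_update {ι M : Type*} {α : ι → Type*} [Fintype ι]
    [DecidableEq ι] [AddCommGroup M] (f : ∀ i, α i → M) (g : ∀ i, α i) (j : ι) (v : α j) :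
    ∑ i, f i (g i) - ∑ i, f i (Function.update g j v i) = f j (g j) - f j v := by
  simp_rw [Function.apply_update f g j v]
  rw [Finset.sum_update_of_mem (mem_univ j),
    Finset.sum_eq_add_sum_sdiff_singleton_of_mem (mem_univ j)]
  abel

theorem Vcost'_sub_eq_Psi'_sub (d : X × X → ℝ) (p : X × (Fin n → X) × (∀ i, W i) → ℝ) (ρ : ℝ)
    (a : ∀ i, Y i × X × W i → ℝ) (β β' : X × (∀ i, Y i) → ℝ) :
    Vcost' d p a β - Vcost' d p a β' = Psi' d p ρ a β - Psi' d p ρ a β' := by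
  simp only [Vcost', Psi']
  ring

theorem Ucost'_sub_update_eq_Psi'_sub (d : X × X → ℝ) (p : X × (Fin n → X) × (∀ i, W i) → ℝ)
    (ρ : ℝ) (j : Fin n) (a : ∀ i, Y i × X × W i → ℝ) (ᾱ : Y j × X × W j → ℝ)
    (β : X × (∀ i, Y i) → ℝ) :
    Ucost' d p ρ j a β - Ucost' d p ρ j (Function.update a j ᾱ) β =
      Psi' d p ρ a β - Psi' d p ρ (Function.update a j ᾱ) β := by
  have hζ := Fintype.sum_apply_sub_sum_apply_update (zeta' p) a j ᾱ
  simp only [Ucost', Psi', Function.update_self]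
  linear_combination (-ρ) * hζ

theorem multi_sender_potential_game_general
    (p : X × (Fin n → X) × (∀ i, W i) → ℝ)
    (d : X × X → ℝ)
    (ρ : ℝ) :
    ∀ (a : ∀ i, Y i × X × W i → ℝ), (∀ i, a i ∈ senderSet' X i) →
      ∀ β ∈ receiverSet' X Y, ∀ β' ∈ receiverSet' X Y,
        ∀ j : Fin n, ∀ ᾱ ∈ senderSet' X j,
          Vcost' d p a β - Vcost' d p a β' = Psi' d p ρ a β - Psi' d p ρ a β' ∧
          Ucost' d p ρ j a β - Ucost' d p ρ j (Function.update a j ᾱ) β =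
            Psi' d p ρ a β - Psi' d p ρ (Function.update a j ᾱ) β :=
  fun a _ β _ β' _ j ᾱ _ =>
    ⟨Vcost'_sub_eq_Psi'_sub d p ρ a β β', Ucost'_sub_update_eq_Psi'_sub d p ρ j a ᾱ β⟩

/-- `Ψ'((α⁽ⁱ⁾)ᵢ, β) = ξ'(β, (α⁽ⁱ⁾)ᵢ) + ρ ∑ᵢ ζ'_i(α⁽ⁱ⁾)` is an exact
potential function for the multi-sender privacy game. -/
theorem multi_sender_potential_game
    [Nonempty X] [∀ i, Nonempty (Y i)] [∀ i, Nonempty (W i)] (hn : 1 ≤ n)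
    (p : X × (Fin n → X) × (∀ i, W i) → ℝ) (hp0 : ∀ t, 0 ≤ p t)
    (hp1 : ∑ x, ∑ zs : Fin n → X, ∑ ws : ∀ i, W i, p (x, zs, ws) = 1)
    (d : X × X → ℝ) (hd : ∀ t, 0 ≤ d t)
    (ρ : ℝ) (hρ : 0 ≤ ρ) :
    ∀ (a : ∀ i, Y i × X × W i → ℝ), (∀ i, a i ∈ senderSet' X i) →
      ∀ β ∈ receiverSet' X Y, ∀ β' ∈ receiverSet' X Y,
        ∀ j : Fin n, ∀ ᾱ ∈ senderSet' X j,
          Vcost' d p a β - Vcost' d p a β' = Psi' d p ρ a β - Psi' d p ρ a β' ∧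
          Ucost' d p ρ j a β - Ucost' d p ρ j (Function.update a j ᾱ) β =
            Psi' d p ρ a β - Psi' d p ρ (Function.update a j ᾱ) β :=
  multi_sender_potential_game_general p d ρ
end
end

section
/- If ((α^(i),*)_i,β*) ∈ ∏_i A'_i × B' satisfies Ψ'((α^(i),*)_i,β*) ≤ Ψ'((α^(i))_i,β) for all ((α^(i))_i,β) ∈ ∏_i A'_i × B', then ((α^(i),*)_i,β*) is a Nash equilibrium of the multi-sender privacy game. -/
open Finset

noncomputable section

variable {n : ℕ} {X : Type*} {Y W : Fin n → Type*}
  [Fintype X] [∀ i, Fintype (Y i)] [∀ i, Fintype (W i)]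

/-!
`Ψ'` is an exact potential for the game: a unilateral deviation of sender `j` leaves every
`ζ'_i` with `i ≠ j` unchanged, so it changes `Ψ'` by exactly the change of `U_j`, and a
deviation of the receiver changes `Ψ'` by exactly the change of `V`. A global minimizer of
`Ψ'` therefore admits no profitable unilateral deviation.
-/

section ExactPotential

variable (d : X × X → ℝ) (p : X × (Fin n → X) × (∀ i, W i) → ℝ) (ρ : ℝ)
  (a : ∀ i, Y i × X × W i → ℝ)

theorem sum_zeta'_update_sub (j : Fin n) (ᾱ : Y j × X × W j → ℝ) :
    ∑ i, zeta' p i (Function.update a j ᾱ i) - ∑ i, zeta' p i (a i) =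
      zeta' p j ᾱ - zeta' p j (a j) := by
  rw [← sum_sub_distrib, Fintype.sum_eq_single j fun i hi => by
    rw [Function.update_of_ne hi, sub_self], Function.update_self]

theorem Psi'_update_sub (j : Fin n) (ᾱ : Y j × X × W j → ℝ) (β : X × (∀ i, Y i) → ℝ) :
    Psi' d p ρ (Function.update a j ᾱ) β - Psi' d p ρ a β =
      Ucost' d p ρ j (Function.update a j ᾱ) β - Ucost' d p ρ j a β := by
  have hzeta := sum_zeta'_update_sub p a j ᾱ
  simp only [Psi', Ucost', Function.update_self]
  linear_combination ρ * hzeta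

theorem Psi'_sub_Psi' (β β' : X × (∀ i, Y i) → ℝ) :
    Psi' d p ρ a β' - Psi' d p ρ a β = Vcost' d p a β' - Vcost' d p a β := by
  simp only [Psi', Vcost']
  ring

end ExactPotential

theorem update_mem_senderSet' {a : ∀ i, Y i × X × W i → ℝ} (ha : ∀ i, a i ∈ senderSet' X i)
    {j : Fin n} {ᾱ : Y j × X × W j → ℝ} (hᾱ : ᾱ ∈ senderSet' X j) (i : Fin n) :
    Function.update a j ᾱ i ∈ senderSet' X i := by
  rcases eq_or_ne i j with rfl | hij
  · rwa [Function.update_self]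
  · rw [Function.update_of_ne hij]
    exact ha i

theorem multi_sender_potential_minimizer_is_nash_general
    (p : X × (Fin n → X) × (∀ i, W i) → ℝ)
    (d : X × X → ℝ)
    (ρ : ℝ)
    (astar : ∀ i, Y i × X × W i → ℝ) (βstar : X × (∀ i, Y i) → ℝ)
    (hastar : ∀ i, astar i ∈ senderSet' X i) (hβstar : βstar ∈ receiverSet' X Y)
    (hmin : ∀ (a : ∀ i, Y i × X × W i → ℝ), (∀ i, a i ∈ senderSet' X i) →
      ∀ β ∈ receiverSet' X Y, Psi' d p ρ astar βstar ≤ Psi' d p ρ a β) :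
    IsNash' d p ρ astar βstar := by
  refine ⟨hastar, hβstar, fun j ᾱ hᾱ => ?_, fun β' hβ' => ?_⟩
  · have hdev := hmin _ (update_mem_senderSet' hastar hᾱ) βstar hβstar
    have hpot := Psi'_update_sub d p ρ astar j ᾱ βstar
    linarith
  · have hdev := hmin astar hastar β' hβ'
    have hpot := Psi'_sub_Psi' d p ρ astar βstar β'
    linarith

/-- any global minimizer of the potential `Ψ'` over `∏ᵢ A'_i × B'` is a
Nash equilibrium of the multi-sender privacy game. -/
theorem multi_sender_potential_minimizer_is_nash
    [Nonempty X] [∀ i, Nonempty (Y i)] [∀ i, Nonempty (W i)] (hn : 1 ≤ n)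
    (p : X × (Fin n → X) × (∀ i, W i) → ℝ) (hp0 : ∀ t, 0 ≤ p t)
    (hp1 : ∑ x, ∑ zs : Fin n → X, ∑ ws : ∀ i, W i, p (x, zs, ws) = 1)
    (d : X × X → ℝ) (hd : ∀ t, 0 ≤ d t)
    (ρ : ℝ) (hρ : 0 ≤ ρ)
    (astar : ∀ i, Y i × X × W i → ℝ) (βstar : X × (∀ i, Y i) → ℝ)
    (hastar : ∀ i, astar i ∈ senderSet' X i) (hβstar : βstar ∈ receiverSet' X Y)
    (hmin : ∀ (a : ∀ i, Y i × X × W i → ℝ), (∀ i, a i ∈ senderSet' X i) →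
      ∀ β ∈ receiverSet' X Y, Psi' d p ρ astar βstar ≤ Psi' d p ρ a β) :
    IsNash' d p ρ astar βstar :=
  multi_sender_potential_minimizer_is_nash_general p d ρ astar βstar hastar hβstar hmin
end
end

section
/- Let ε > 0 and let s = ((α^(i))_i,β) ∈ ∏_i A'_i × B'. Let β⁺ ∈ B' satisfy V((α^(i))_i,β⁺) ≤ V((α^(i))_i,β̄) for all β̄ ∈ B', and for each j ∈ {1,…,n} let α^(j)⁺ ∈ A'_j satisfy U_j(α^(j)⁺,(α^(i))_{i≠j},β) ≤ U_j(ᾱ^(j),(α^(i))_{i≠j},β) for all ᾱ^(j) ∈ A'_j. Define s_0 = ((α^(i))_i,β⁺) and, for j ∈ {1,…,n}, s_j = (α^(j)⁺,(α^(i))_{i≠j},β). Then Ψ'(s_j) ≤ Ψ'(s) for every j ∈ {0,1,…,n}, and if s ∉ 𝒩'_ε then ∑_{j=0}^{n} (Ψ'(s_j) − Ψ'(s)) < −ε; equivalently, the expected one-step change of the potential under a uniformly random choice of updating player is less than −ε/(n+1). -/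
open Finset

noncomputable section

variable {n : ℕ} {X : Type*} {Y W : Fin n → Type*}
  [Fintype X] [∀ i, Fintype (Y i)] [∀ i, Fintype (W i)]

/-!
Best-response dynamics on an exact potential game. Changing one sender's policy changes `Ψ'`
by exactly the change of that sender's cost `U_j`, because `ξ'` is common to both and the other
`ζ'_i` are untouched; changing the receiver's policy changes `Ψ'` by the change of `V = ξ'`.
Hence each best response lowers `Ψ'` at least as much as any other unilateral deviation, in
particular at least as much as staying put (no increase) and, when `s` is not an `ε`-equilibrium,
at least as much as the deviation gaining more than `ε`.
-/

theorem Finset.sum_apply_update_sub {ι M : Type*} [Fintype ι] [DecidableEq ι]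
    [AddCommGroup M] {κ : ι → Type*} (f : ∀ i, κ i → M) (g : ∀ i, κ i) (j : ι) (v : κ j) :
    ∑ i, f i (Function.update g j v i) - ∑ i, f i (g i) = f j v - f j (g j) := by
  simp only [Function.apply_update f, Finset.sum_update_of_mem (Finset.mem_univ j),
    Finset.sum_eq_add_sum_sdiff_singleton_of_mem (Finset.mem_univ j) (fun i => f i (g i))]
  abel

theorem Finset.sum_lt_of_nonpos_of_lt {ι M : Type*} [Fintype ι] [AddCommMonoid M] [Preorder M]
    [AddLeftMono M] (f : ι → M) {c : M}
    (hf : ∀ i, f i ≤ 0) (j : ι) (hj : f j < c) : ∑ i, f i < c := by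
  classical
  calc ∑ i, f i ≤ f j := by
        simpa using Finset.sum_le_sum_of_subset_of_nonpos' (Finset.subset_univ {j})
          (fun i _ _ => hf i)
    _ < c := hj

section PotentialGame

variable (d : X × X → ℝ) (p : X × (Fin n → X) × (∀ i, W i) → ℝ) (ρ : ℝ)
  (a : ∀ i, Y i × X × W i → ℝ) (β : X × (∀ i, Y i) → ℝ)

theorem psi_update_sub (j : Fin n) (α : Y j × X × W j → ℝ) :
    Psi' d p ρ (Function.update a j α) β - Psi' d p ρ a β =
      Ucost' d p ρ j (Function.update a j α) β - Ucost' d p ρ j a β := by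
  have hzeta := Finset.sum_apply_update_sub (fun i => zeta' p i) a j α
  simp only [Psi', Ucost', Function.update_self]
  linear_combination ρ * hzeta

theorem psi_sub_of_receiver (β' : X × (∀ i, Y i) → ℝ) :
    Psi' d p ρ a β' - Psi' d p ρ a β = Vcost' d p a β' - Vcost' d p a β := by
  simp only [Psi', Vcost']
  ring

theorem psi_sender_best_response_sub_le {j : Fin n} {aplus ᾱ : Y j × X × W j → ℝ}
    (hbest : Ucost' d p ρ j (Function.update a j aplus) β ≤
      Ucost' d p ρ j (Function.update a j ᾱ) β) :
    Psi' d p ρ (Function.update a j aplus) β - Psi' d p ρ a β ≤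
      Ucost' d p ρ j (Function.update a j ᾱ) β - Ucost' d p ρ j a β := by
  rw [psi_update_sub]
  linarith

theorem psi_receiver_best_response_sub_le {βplus β' : X × (∀ i, Y i) → ℝ}
    (hbest : Vcost' d p a βplus ≤ Vcost' d p a β') :
    Psi' d p ρ a βplus - Psi' d p ρ a β ≤ Vcost' d p a β' - Vcost' d p a β := by
  rw [psi_sub_of_receiver]
  linarith

theorem exists_profitable_deviation_of_not_isEpsNash {ε : ℝ}
    (ha : ∀ i, a i ∈ senderSet' X i) (hβ : β ∈ receiverSet' X Y)
    (hne : ¬ IsEpsNash' d p ρ ε a β) :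
    (∃ j, ∃ ᾱ ∈ senderSet' X j,
      Ucost' d p ρ j (Function.update a j ᾱ) β - Ucost' d p ρ j a β < -ε) ∨
    ∃ β' ∈ receiverSet' X Y, Vcost' d p a β' - Vcost' d p a β < -ε := by
  by_contra! h
  exact hne ⟨ha, hβ, fun j ᾱ hᾱ => by linarith [h.1 j ᾱ hᾱ],
    fun β' hβ' => by linarith [h.2 β' hβ']⟩

end PotentialGame

theorem multi_sender_expected_potential_drop_general
    (p : X × (Fin n → X) × (∀ i, W i) → ℝ)
    (d : X × X → ℝ)
    (ρ : ℝ) (ε : ℝ)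
    (a : ∀ i, Y i × X × W i → ℝ) (β : X × (∀ i, Y i) → ℝ)
    (ha : ∀ i, a i ∈ senderSet' X i) (hβ : β ∈ receiverSet' X Y)
    (βplus : X × (∀ i, Y i) → ℝ)
    (hβplusmin : ∀ β' ∈ receiverSet' X Y, Vcost' d p a βplus ≤ Vcost' d p a β')
    (aplus : ∀ j, Y j × X × W j → ℝ)
    (haplusmin : ∀ j : Fin n, ∀ ᾱ ∈ senderSet' X j,
      Ucost' d p ρ j (Function.update a j (aplus j)) β ≤
        Ucost' d p ρ j (Function.update a j ᾱ) β) :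
    (Psi' d p ρ a βplus ≤ Psi' d p ρ a β) ∧
    (∀ j : Fin n, Psi' d p ρ (Function.update a j (aplus j)) β ≤ Psi' d p ρ a β) ∧
    (¬ IsEpsNash' d p ρ ε a β →
      (Psi' d p ρ a βplus - Psi' d p ρ a β) +
        ∑ j : Fin n,
          (Psi' d p ρ (Function.update a j (aplus j)) β - Psi' d p ρ a β) < -ε) := by
  have hsender (j : Fin n) (ᾱ) (hᾱ : ᾱ ∈ senderSet' X j) :=
    psi_sender_best_response_sub_le d p ρ a β (haplusmin j ᾱ hᾱ)
  have hreceiver (β') (hβ' : β' ∈ receiverSet' X Y) :=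
    psi_receiver_best_response_sub_le d p ρ a β (hβplusmin β' hβ')
  have hreceiver_nonpos : Psi' d p ρ a βplus - Psi' d p ρ a β ≤ 0 := by
    simpa using hreceiver β hβ
  have hsender_nonpos (j : Fin n) :
      Psi' d p ρ (Function.update a j (aplus j)) β - Psi' d p ρ a β ≤ 0 := by
    simpa using hsender j (a j) (ha j)
  refine ⟨sub_nonpos.1 hreceiver_nonpos, fun j => sub_nonpos.1 (hsender_nonpos j), fun hne => ?_⟩
  rcases exists_profitable_deviation_of_not_isEpsNash d p ρ a β ha hβ hne with
    ⟨j, ᾱ, hᾱ, hgain⟩ | ⟨β', hβ', hgain⟩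
  · linarith [Finset.sum_lt_of_nonpos_of_lt _ hsender_nonpos j
      ((hsender j ᾱ hᾱ).trans_lt hgain)]
  · linarith [Finset.sum_nonpos fun j (_ : j ∈ Finset.univ) => hsender_nonpos j,
      hreceiver β' hβ']

/-- one-step best responses never increase the potential `Ψ'`, and if the
current state `s = ((α⁽ⁱ⁾)ᵢ, β)` is not an `ε`-Nash equilibrium, then the sum over the
`n + 1` candidate unilateral best responses of the corresponding potential changes is
less than `-ε`; equivalently, the expected one-step change of the potential under a
uniformly random choice of the updating player is less than `-ε / (n + 1)`. -/
theorem multi_sender_expected_potential_drop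
    [Nonempty X] [∀ i, Nonempty (Y i)] [∀ i, Nonempty (W i)] (hn : 1 ≤ n)
    (p : X × (Fin n → X) × (∀ i, W i) → ℝ) (hp0 : ∀ t, 0 ≤ p t)
    (hp1 : ∑ x, ∑ zs : Fin n → X, ∑ ws : ∀ i, W i, p (x, zs, ws) = 1)
    (d : X × X → ℝ) (hd : ∀ t, 0 ≤ d t)
    (ρ : ℝ) (hρ : 0 ≤ ρ) (ε : ℝ) (hε : 0 < ε)
    (a : ∀ i, Y i × X × W i → ℝ) (β : X × (∀ i, Y i) → ℝ)
    (ha : ∀ i, a i ∈ senderSet' X i) (hβ : β ∈ receiverSet' X Y)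
    (βplus : X × (∀ i, Y i) → ℝ) (hβplus : βplus ∈ receiverSet' X Y)
    (hβplusmin : ∀ β' ∈ receiverSet' X Y, Vcost' d p a βplus ≤ Vcost' d p a β')
    (aplus : ∀ j, Y j × X × W j → ℝ) (haplus : ∀ j, aplus j ∈ senderSet' X j)
    (haplusmin : ∀ j : Fin n, ∀ ᾱ ∈ senderSet' X j,
      Ucost' d p ρ j (Function.update a j (aplus j)) β ≤
        Ucost' d p ρ j (Function.update a j ᾱ) β) :
    (Psi' d p ρ a βplus ≤ Psi' d p ρ a β) ∧
    (∀ j : Fin n, Psi' d p ρ (Function.update a j (aplus j)) β ≤ Psi' d p ρ a β) ∧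
    (¬ IsEpsNash' d p ρ ε a β →
      (Psi' d p ρ a βplus - Psi' d p ρ a β) +
        ∑ j : Fin n,
          (Psi' d p ρ (Function.update a j (aplus j)) β - Psi' d p ρ a β) < -ε) :=
  multi_sender_expected_potential_drop_general p d ρ ε a β ha hβ βplus hβplusmin aplus haplusmin
end
end
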